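/- For every 2 ≤ i ≤ m and 2 ≤ j ≤ n: if i < j then min{D[i−1,j], D[i,j−1], D[i−1,j−1]} = D[i,j−1]; if i > j then min{D[i−1,j], D[i,j−1], D[i−1,j−1]} = D[i−1,j]; and if i = j then min{D[i−1,j], D[i,j−1], D[i−1,j−1]} = D[i−1,j−1]. -/

import Mathlib

/-- The DTW dynamic programming table recurrence for sequences `a` (length `m`)
and `b` (length `n`), both indexed from 1. -/
def DTWTable (a b : ℕ → ℝ) (m n : ℕ) (D : ℕ → ℕ → ℝ) : Prop :=
  D 1 1 = (a 1 - b 1) ^ 2 ∧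
  (∀ i, 1 < i → i ≤ m → D i 1 = D (i - 1) 1 + (a i - b 1) ^ 2) ∧
  (∀ j, 1 < j → j ≤ n → D 1 j = D 1 (j - 1) + (a 1 - b j) ^ 2) ∧
  (∀ i j, 1 < i → i ≤ m → 1 < j → j ≤ n →
    D i j = min (min (D i (j - 1)) (D (i - 1) j)) (D (i - 1) (j - 1)) + (a i - b j) ^ 2)

/-!
Since every `a i` exceeds every `b j`, the cost `(a i - b j) ^ 2` decreases down each column.
By induction on the row index one shows that on and above the diagonal the table decreases
down each column (`D (p + 1) q ≤ D p q` for `p < q`) and increases along each row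
(`D p q ≤ D p (q + 1)` for `p ≤ q`); these two facts identify the minimum for `i ≤ j`.
Transposing the table and negating the sequences preserves all hypotheses and exchanges the
two sides of the diagonal, which gives the case `j < i`.
-/

namespace DTWTable

variable {a b : ℕ → ℝ} {m n : ℕ} {D : ℕ → ℕ → ℝ}

theorem first_row_succ (hD : DTWTable a b m n D) {q : ℕ} (hq : 1 ≤ q) (hqn : q < n) :
    D 1 (q + 1) = D 1 q + (a 1 - b (q + 1)) ^ 2 := by
  simpa using hD.2.2.1 (q + 1) (by omega) hqn

theorem succ_succ (hD : DTWTable a b m n D) {p q : ℕ} (hp : 1 ≤ p) (hpm : p < m)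
    (hq : 1 ≤ q) (hqn : q < n) :
    D (p + 1) (q + 1) =
      min (min (D (p + 1) q) (D p (q + 1))) (D p q) + (a (p + 1) - b (q + 1)) ^ 2 := by
  simpa using hD.2.2.2 (p + 1) (q + 1) (by omega) hpm (by omega) hqn

theorem transpose (hD : DTWTable a b m n D) :
    DTWTable (fun j ↦ -b j) (fun i ↦ -a i) n m (fun j i ↦ D i j) := by
  obtain ⟨h11, hcol, hrow, hrec⟩ := hD
  refine ⟨by beta_reduce; rw [h11]; ring, fun j hj hjn ↦ ?_, fun i hi him ↦ ?_,
    fun j i hj hjn hi him ↦ ?_⟩ <;> beta_reduce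
  · rw [hrow j hj hjn]; ring
  · rw [hcol i hi him]; ring
  · rw [hrec i j hi him hj hjn, min_comm (D i (j - 1))]; ring

section AboveDiagonal

variable (hD : DTWTable a b m n D) (hA : ∀ i, 1 ≤ i → i < m → a (i + 1) ≤ a i)
  (hab : ∀ i j, 1 ≤ i → i ≤ m → 1 ≤ j → j ≤ n → b j ≤ a i)
include hD hA hab

theorem monotone_above_diag {p : ℕ} (hp : 1 ≤ p) :
    ∀ q, (p < q → q ≤ n → p < m → D (p + 1) q ≤ D p q) ∧
      (p ≤ q → q < n → p ≤ m → D p q ≤ D p (q + 1)) := by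
  have cost_le {p q : ℕ} (hp : 1 ≤ p) (hpm : p < m) (hq : 1 ≤ q) (hqn : q ≤ n) :
      (a (p + 1) - b q) ^ 2 ≤ (a p - b q) ^ 2 := by
    have := hab (p + 1) q (by omega) hpm hq hqn
    have := hA p hp hpm
    gcongr
  have diag_le {p q : ℕ} (hp : 1 ≤ p) (hpm : p < m) (hq : 1 ≤ q) (hqn : q < n) :
      D (p + 1) (q + 1) ≤ D p q + (a p - b (q + 1)) ^ 2 := by
    rw [hD.succ_succ hp hpm hq hqn]
    linarith [min_le_right (min (D (p + 1) q) (D p (q + 1))) (D p q),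
      cost_le hp hpm (q := q + 1) (by omega) hqn]
  induction p, hp using Nat.le_induction with
  | base =>
    refine fun q ↦ ⟨fun hq hqn hm ↦ ?_, fun hq hqn _ ↦ ?_⟩
    · obtain ⟨k, rfl⟩ : ∃ k, q = k + 1 := ⟨q - 1, by omega⟩
      rw [hD.first_row_succ (by omega) (by omega)]
      exact diag_le le_rfl hm (by omega) (by omega)
    · rw [hD.first_row_succ hq hqn]
      linarith [sq_nonneg (a 1 - b (q + 1))]
  | succ p hp ih =>
    have left_step {k : ℕ} (hpk : p < k) (hkn : k < n) (hpm : p + 1 ≤ m) :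
        D (p + 1) (k + 1) = D (p + 1) k + (a (p + 1) - b (k + 1)) ^ 2 := by
      have h_up := (ih k).1 hpk hkn.le (by omega)
      have h_right := (ih k).2 hpk.le hkn (by omega)
      rw [hD.succ_succ (by omega) (by omega) (by omega) hkn,
        min_eq_left (h_up.trans h_right), min_eq_left h_up]
    refine fun q ↦ ⟨fun hq hqn hm ↦ ?_, fun hq hqn hm ↦ ?_⟩
    · obtain ⟨k, rfl⟩ : ∃ k, q = k + 1 := ⟨q - 1, by omega⟩
      rw [left_step (by omega) (by omega) hm.le]
      exact diag_le (by omega) hm (by omega) (by omega)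
    · rw [left_step (by omega) hqn hm]
      linarith [sq_nonneg (a (p + 1) - b (q + 1))]

theorem next_row_le_of_lt {p q : ℕ} (hp : 1 ≤ p) (hpq : p < q) (hqn : q ≤ n) (hpm : p < m) :
    D (p + 1) q ≤ D p q :=
  (monotone_above_diag hD hA hab hp q).1 hpq hqn hpm

theorem le_next_col_of_le {p q : ℕ} (hp : 1 ≤ p) (hpq : p ≤ q) (hqn : q < n) (hpm : p ≤ m) :
    D p q ≤ D p (q + 1) :=
  (monotone_above_diag hD hA hab hp q).2 hpq hqn hpm

end AboveDiagonal

end DTWTable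

theorem le_of_antitone_of_monotone {α : Type*} [Preorder α] {a b : ℕ → α} {m n : ℕ}
    (hA : ∀ i, 1 ≤ i → i < m → a (i + 1) ≤ a i) (hB : ∀ j, 1 ≤ j → j < n → b j ≤ b (j + 1))
    (hAB : b n ≤ a m) {i j : ℕ} (hi : 1 ≤ i) (him : i ≤ m) (hj : 1 ≤ j) (hjn : j ≤ n) :
    b j ≤ a i := by
  have a_anti : AntitoneOn a (Set.Icc 1 m) :=
    antitoneOn_of_succ_le Set.ordConnected_Icc fun i _ hi hi' ↦
      hA i hi.1 (Nat.succ_le_iff.mp hi'.2)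
  have b_mono : MonotoneOn b (Set.Icc 1 n) :=
    monotoneOn_of_le_succ Set.ordConnected_Icc fun j _ hj hj' ↦
      hB j hj.1 (Nat.succ_le_iff.mp hj'.2)
  calc b j ≤ b n := b_mono ⟨hj, hjn⟩ ⟨by omega, le_rfl⟩ hjn
    _ ≤ a m := hAB
    _ ≤ a i := a_anti ⟨hi, him⟩ ⟨by omega, le_rfl⟩ him

theorem stmt_7_general (a b : ℕ → ℝ) (m n : ℕ)
    (D : ℕ → ℕ → ℝ) (hD : DTWTable a b m n D)
    (hA : ∀ i, 1 ≤ i → i < m → a (i + 1) ≤ a i)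
    (hB : ∀ j, 1 ≤ j → j < n → b j ≤ b (j + 1))
    (hAB : b n < a m) :
    ∀ i j, 2 ≤ i → i ≤ m → 2 ≤ j → j ≤ n →
      (i < j → min (min (D (i - 1) j) (D i (j - 1))) (D (i - 1) (j - 1)) = D i (j - 1)) ∧
      (j < i → min (min (D (i - 1) j) (D i (j - 1))) (D (i - 1) (j - 1)) = D (i - 1) j) ∧
      (i = j → min (min (D (i - 1) j) (D i (j - 1))) (D (i - 1) (j - 1)) = D (i - 1) (j - 1)) := by
  have hab : ∀ i j, 1 ≤ i → i ≤ m → 1 ≤ j → j ≤ n → b j ≤ a i :=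
    fun _ _ ↦ le_of_antitone_of_monotone hA hB hAB.le
  have hD' := hD.transpose
  have hA' j (hj : 1 ≤ j) (hjn : j < n) : -b (j + 1) ≤ -b j := neg_le_neg (hB j hj hjn)
  have hab' j i (hj : 1 ≤ j) (hjn : j ≤ n) (hi : 1 ≤ i) (him : i ≤ m) : -a i ≤ -b j :=
    neg_le_neg (hab i j hi him hj hjn)
  intro i j hi him hj hjn
  obtain ⟨p, rfl⟩ : ∃ p, i = p + 1 := ⟨i - 1, by omega⟩
  obtain ⟨q, rfl⟩ : ∃ q, j = q + 1 := ⟨j - 1, by omega⟩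
  simp only [Nat.add_sub_cancel]
  refine ⟨fun hpq ↦ ?_, fun hqp ↦ ?_, fun hpq ↦ ?_⟩
  · have h_up := hD.next_row_le_of_lt (p := p) (q := q) hA hab
      (by omega) (by omega) (by omega) (by omega)
    have h_right := hD.le_next_col_of_le (p := p) (q := q) hA hab
      (by omega) (by omega) (by omega) (by omega)
    rw [min_eq_right (h_up.trans h_right), min_eq_left h_up]
  · have h_left := hD'.next_row_le_of_lt (p := q) (q := p) hA' hab'
      (by omega) (by omega) (by omega) (by omega)
    have h_down := hD'.le_next_col_of_le (p := q) (q := p) hA' hab'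
      (by omega) (by omega) (by omega) (by omega)
    rw [min_eq_left (h_left.trans h_down), min_eq_left h_left]
  · obtain rfl : p = q := by omega
    have h_right := hD.le_next_col_of_le (p := p) (q := p) hA hab
      (by omega) le_rfl (by omega) (by omega)
    have h_down := hD'.le_next_col_of_le (p := p) (q := p) hA' hab'
      (by omega) le_rfl (by omega) (by omega)
    exact min_eq_right (le_min h_right h_down)

theorem stmt_7 (a b : ℕ → ℝ) (m n : ℕ) (hm : 1 ≤ m) (hn : 1 ≤ n)
    (D : ℕ → ℕ → ℝ) (hD : DTWTable a b m n D)
    (hA : ∀ i, 1 ≤ i → i < m → a (i + 1) ≤ a i)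
    (hB : ∀ j, 1 ≤ j → j < n → b j ≤ b (j + 1))
    (hAB : b n < a m) :
    ∀ i j, 2 ≤ i → i ≤ m → 2 ≤ j → j ≤ n →
      (i < j → min (min (D (i - 1) j) (D i (j - 1))) (D (i - 1) (j - 1)) = D i (j - 1)) ∧
      (j < i → min (min (D (i - 1) j) (D i (j - 1))) (D (i - 1) (j - 1)) = D (i - 1) j) ∧
      (i = j → min (min (D (i - 1) j) (D i (j - 1))) (D (i - 1) (j - 1)) = D (i - 1) (j - 1)) :=
  stmt_7_general a b m n D hD hA hB hAB
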